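/- arXiv:2401.11573 — 2 statements merged into one kernel-verified Lean document; each statement's English description precedes it below -/
import Mathlib

section
/- Let C ⊆ ℝ^{n×p} be a δ-proximally smooth closed set, i.e., the metric projection Proj_C(X) is a singleton whenever dist(X, C) < δ. Then for any γ ∈ (0, δ) and any X, Y with dist(X, C) < γ and dist(Y, C) < γ, ‖Proj_C(X) - Proj_C(Y)‖_F ≤ (δ/(δ - γ))·‖X - Y‖_F. -/
/-!
The key fact is the proximal normal inequality with the full radius `δ`: if `p = proj x` and
`d = dist(x, C) < δ`, then `2 δ ⟪x - p, c - p⟫ ≤ d ‖c - p‖²` for all `c ∈ C`, i.e. the open ball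
of radius `δ` about `p + δ (x - p) / d` misses `C`. To prove it one follows the field of
unit normals `(y - proj y) / dist(y, C)`, which is continuous on the tube because the projection is:
a short step along it raises the distance to `C` at rate almost `1`, so by continuous induction some
point of the ball of radius `T` about `x` is at distance `d + T` from `C`, and by strict convexity
that point is `p + (d + T) (x - p) / d`. Adding the normal inequalities at `x` and `y` with
`P = proj x`, `Q = proj y` gives `(δ - γ) ‖P - Q‖² ≤ δ ⟪x - y, P - Q⟫`, whence the Lipschitz
bound.
-/

open Metric Set Filter Topology
open scoped RealInnerProductSpace

lemma isClosed_setOf_exists_dist_le_inter_Icc {X : Type*} [PseudoMetricSpace X] [ProperSpace X]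
    {f : ℝ → ℝ} {g : X → ℝ} (hf : Continuous f) (hg : Continuous g) (x : X) (T : ℝ) :
    IsClosed ({r | ∃ z, dist z x ≤ r ∧ f r ≤ g z} ∩ Icc 0 T) := by
  have hK : IsCompact {q : ℝ × X | q ∈ Icc 0 T ×ˢ closedBall x T ∧
      dist q.2 x ≤ q.1 ∧ f q.1 ≤ g q.2} :=
    (isCompact_Icc.prod (isCompact_closedBall x T)).of_isClosed_subset
      ((isClosed_Icc.prod isClosed_closedBall).inter
        ((isClosed_le (continuous_snd.dist continuous_const) continuous_fst).inter
          (isClosed_le (hf.comp continuous_fst) (hg.comp continuous_snd))))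
      fun _ hq => hq.1
  convert (hK.image continuous_fst).isClosed using 1
  ext r
  constructor
  · rintro ⟨⟨z, hzx, hz⟩, hr⟩
    exact ⟨(r, z), ⟨⟨hr, mem_closedBall.2 (hzx.trans hr.2)⟩, hzx, hz⟩, rfl⟩
  · rintro ⟨⟨r, z⟩, ⟨⟨hr, -⟩, hzx, hz⟩, rfl⟩
    exact ⟨⟨z, hzx, hz⟩, hr⟩

variable {E : Type*} [NormedAddCommGroup E]

/-- `proj` is the single-valued metric projection onto `C` on the open `δ`-tube around `C`. -/
structure IsMetricProjOnTube (C : Set E) (δ : ℝ) (proj : E → E) : Prop where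
  mem : ∀ x, infDist x C < δ → proj x ∈ C
  norm_sub : ∀ x, infDist x C < δ → ‖x - proj x‖ = infDist x C
  eq_of_norm_sub : ∀ x, infDist x C < δ → ∀ y ∈ C, ‖x - y‖ = infDist x C → y = proj x

namespace IsMetricProjOnTube

variable {C : Set E} {δ : ℝ} {proj : E → E}

lemma eventually_mem_closedBall (h : IsMetricProjOnTube C δ proj) {x : E}
    (hx : infDist x C < δ) {η : ℝ} (hη : 0 < η) :
    ∀ᶠ y in 𝓝 x, proj y ∈ C ∩ closedBall x (infDist x C + η) := by
  have htube : {y | infDist y C < δ} ∈ 𝓝 x :=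
    (isOpen_lt (continuous_infDist_pt C) continuous_const).mem_nhds hx
  filter_upwards [htube, ball_mem_nhds x (half_pos hη)] with y hy hyx
  refine ⟨h.mem y hy, mem_closedBall.2 ?_⟩
  have hyx' : dist y x < η / 2 := hyx
  have := infDist_le_infDist_add_dist (x := y) (y := x) (s := C)
  calc dist (proj y) x ≤ dist (proj y) y + dist y x := dist_triangle _ _ _
    _ = infDist y C + dist y x := by rw [dist_comm, dist_eq_norm, h.norm_sub y hy]
    _ ≤ infDist x C + η := by linarith

lemma continuousAt [ProperSpace E] (h : IsMetricProjOnTube C δ proj) (hC : IsClosed C) {x : E}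
    (hx : infDist x C < δ) : ContinuousAt proj x := by
  refine ((isCompact_closedBall x _).inter_left hC).tendsto_nhds_of_unique_mapClusterPt
    (h.eventually_mem_closedBall hx one_pos) fun q hq hclust => ?_
  have hle : dist q x ≤ infDist x C := le_of_forall_pos_le_add fun η hη =>
    ((hC.inter isClosed_closedBall).mem_of_mapClusterPt hclust
      (h.eventually_mem_closedBall hx hη)).2
  refine h.eq_of_norm_sub x hx q hq.1 (le_antisymm ?_ ?_)
  · rwa [← dist_eq_norm, dist_comm]
  · rw [← dist_eq_norm]; exact infDist_le_dist_of_mem hq.1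

end IsMetricProjOnTube

section NormedSpace

variable [NormedSpace ℝ E]

noncomputable def unitNormal (C : Set E) (proj : E → E) (x : E) : E :=
  (infDist x C)⁻¹ • (x - proj x)

namespace IsMetricProjOnTube

variable {C : Set E} {δ : ℝ} {proj : E → E}

lemma norm_unitNormal (h : IsMetricProjOnTube C δ proj) {x : E} (hx : infDist x C < δ)
    (hx0 : 0 < infDist x C) : ‖unitNormal C proj x‖ = 1 := by
  rw [unitNormal, norm_smul, h.norm_sub x hx, norm_inv, Real.norm_of_nonneg hx0.le,
    inv_mul_cancel₀ hx0.ne']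

lemma infDist_sub_smul_unitNormal_le (h : IsMetricProjOnTube C δ proj) {x : E}
    (hx : infDist x C < δ) {τ : ℝ} (hτ : 0 < τ) (hτx : τ ≤ infDist x C) :
    infDist (x - τ • unitNormal C proj x) C ≤ infDist x C - τ := by
  set d := infDist x C
  have hd : 0 < d := hτ.trans_le hτx
  have hseg : x - τ • unitNormal C proj x - proj x = (1 - τ / d) • (x - proj x) := by
    rw [unitNormal, smul_smul, sub_smul, one_smul, div_eq_mul_inv]; abel
  calc infDist (x - τ • unitNormal C proj x) C ≤ dist (x - τ • unitNormal C proj x) (proj x) :=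
        infDist_le_dist_of_mem (h.mem x hx)
    _ = (1 - τ / d) * d := by
        rw [dist_eq_norm, hseg, norm_smul, h.norm_sub x hx,
          Real.norm_of_nonneg (sub_nonneg.2 ((div_le_one hd).2 hτx))]
    _ = d - τ := by field_simp

variable [ProperSpace E]

lemma eventually_add_le_infDist_add_smul (h : IsMetricProjOnTube C δ proj) (hC : IsClosed C)
    {z : E} (hz : infDist z C < δ) (hz0 : 0 < infDist z C) {ε : ℝ} (hε : 0 < ε) :
    ∀ᶠ τ in 𝓝[>] 0, infDist z C + (1 - ε) * τ ≤ infDist (z + τ • unitNormal C proj z) C := by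
  set n := unitNormal C proj
  have hn : ContinuousAt n z :=
    ((continuous_infDist_pt C).continuousAt.inv₀ hz0.ne').smul
      (continuousAt_id.sub (h.continuousAt hC hz))
  set w : ℝ → E := fun τ => z + τ • n z
  have hw : Tendsto w (𝓝 0) (𝓝 z) :=
    (by fun_prop : Continuous w).tendsto' 0 z (by simp [w])
  have htube : ∀ᶠ τ in 𝓝 0, infDist (w τ) C < δ :=
    hw.eventually ((isOpen_lt (continuous_infDist_pt C) continuous_const).mem_nhds hz)
  have hclose : ∀ᶠ τ in 𝓝 0, dist (n (w τ)) (n z) < ε :=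
    (hn.tendsto.comp hw).eventually (ball_mem_nhds _ hε)
  have hfar : ∀ᶠ τ in 𝓝 0, τ < infDist (w τ) C := by
    have := (((continuous_infDist_pt C).tendsto z).comp hw).sub (tendsto_id (x := 𝓝 (0 : ℝ)))
    rw [sub_zero] at this
    filter_upwards [this.eventually (lt_mem_nhds hz0)] with τ hτ
    simpa [sub_pos] using hτ
  filter_upwards [self_mem_nhdsWithin, nhdsWithin_le_nhds (htube.and (hclose.and hfar))]
    with τ (hτ : 0 < τ) ⟨hwτ, hnτ, hτw⟩
  -- step back from `w τ` along its own normal: the normals at `z` and `w τ` nearly agree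
  have hback := h.infDist_sub_smul_unitNormal_le hwτ hτ hτw.le
  have hdev : dist z (w τ - τ • n (w τ)) ≤ ε * τ := by
    rw [dist_eq_norm, show z - (w τ - τ • n (w τ)) = τ • (n (w τ) - n z) by
      simp only [w, smul_sub]; abel,
      norm_smul, Real.norm_of_nonneg hτ.le, ← dist_eq_norm, mul_comm]
    exact mul_le_mul_of_nonneg_right hnτ.le hτ.le
  have := infDist_le_infDist_add_dist (x := z) (y := w τ - τ • n (w τ)) (s := C)
  linarith

lemma exists_dist_le_add_mul_le_infDist (h : IsMetricProjOnTube C δ proj) (hC : IsClosed C)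
    {x : E} (hx0 : 0 < infDist x C) {T : ℝ} (hT : 0 ≤ T) (hxT : infDist x C + T < δ) {ε : ℝ}
    (hε : 0 < ε) (hε1 : ε ≤ 1) :
    ∃ z, dist z x ≤ T ∧ infDist x C + (1 - ε) * T ≤ infDist z C := by
  set d := infDist x C
  set s : Set ℝ := {r | ∃ z, dist z x ≤ r ∧ d + (1 - ε) * r ≤ infDist z C}
  have hs : IsClosed (s ∩ Icc 0 T) :=
    isClosed_setOf_exists_dist_le_inter_Icc (by fun_prop) (continuous_infDist_pt C) x T
  have hstep : ∀ r ∈ s ∩ Ico 0 T, ∀ y ∈ Ioi r, (s ∩ Ioc r y).Nonempty := by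
    rintro r ⟨⟨z, hzx, hz⟩, hr0, hrT⟩ y (hry : r < y)
    have hz0 : 0 < infDist z C := hx0.trans_le (by nlinarith)
    have hzδ : infDist z C < δ := by
      have := infDist_le_infDist_add_dist (x := z) (y := x) (s := C)
      linarith
    obtain ⟨τ, hτ, hτ0, hτr⟩ := ((h.eventually_add_le_infDist_add_smul hC hzδ hz0 hε).and
      (Ioo_mem_nhdsGT (lt_min (sub_pos.2 hry) (sub_pos.2 hrT)))).exists
    refine ⟨r + τ, ⟨z + τ • unitNormal C proj z, ?_, ?_⟩, by linarith, ?_⟩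
    · calc dist (z + τ • unitNormal C proj z) x ≤ dist (z + τ • unitNormal C proj z) z +
            dist z x := dist_triangle _ _ _
        _ ≤ r + τ := by
            rw [dist_eq_norm, add_sub_cancel_left, norm_smul, h.norm_unitNormal hzδ hz0,
              Real.norm_of_nonneg hτ0.le]
            linarith
    · linarith
    · linarith [min_le_left (y - r) (T - r)]
  exact hs.Icc_subset_of_forall_exists_gt ⟨x, (dist_self x).le, by simp [d]⟩ hstep
    (right_mem_Icc.2 hT)

lemma exists_dist_le_add_le_infDist (h : IsMetricProjOnTube C δ proj) (hC : IsClosed C)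
    {x : E} (hx0 : 0 < infDist x C) {T : ℝ} (hT : 0 ≤ T) (hxT : infDist x C + T < δ) :
    ∃ z, dist z x ≤ T ∧ infDist x C + T ≤ infDist z C := by
  obtain ⟨z, hz, hmax⟩ := (isCompact_closedBall x T).exists_isMaxOn (nonempty_closedBall.2 hT)
    (continuous_infDist_pt C).continuousOn
  have hlim : Tendsto (fun ε : ℝ => infDist x C + (1 - ε) * T) (𝓝[>] 0)
      (𝓝 (infDist x C + T)) :=
    ((by fun_prop : Continuous fun ε : ℝ => infDist x C + (1 - ε) * T).tendsto' 0 _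
      (by ring)).mono_left nhdsWithin_le_nhds
  refine ⟨z, hz, le_of_tendsto hlim ?_⟩
  filter_upwards [Ioc_mem_nhdsGT one_pos] with ε hε
  obtain ⟨z', hz'x, hz'⟩ := h.exists_dist_le_add_mul_le_infDist hC hx0 hT hxT hε.1 hε.2
  exact hz'.trans (hmax (mem_closedBall.2 hz'x))

end IsMetricProjOnTube

end NormedSpace

variable [InnerProductSpace ℝ E]

lemma two_mul_inner_le_of_le_infDist {C : Set E} {x p z c : E} {T : ℝ} (hp : p ∈ C)
    (hc : c ∈ C) (hzx : dist z x ≤ T) (hz : ‖x - p‖ + T ≤ infDist z C) :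
    2 * (‖x - p‖ + T) * ⟪x - p, c - p⟫ ≤ ‖x - p‖ * ‖c - p‖ ^ 2 := by
  set t := ‖x - p‖ + T
  have ht : 0 ≤ t := add_nonneg (norm_nonneg _) (dist_nonneg.trans hzx)
  have hzp : t ≤ ‖z - p‖ := hz.trans ((infDist_le_dist_of_mem hp).trans (dist_eq_norm z p).le)
  have hzx' : ‖z - x‖ ≤ T := by rwa [← dist_eq_norm]
  have hsplit : z - p = (z - x) + (x - p) := by abel
  have hle := norm_add_le (z - x) (x - p)
  rw [← hsplit] at hle
  have hzxT : ‖z - x‖ = T := by linarith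
  have hzpt : ‖z - p‖ = t := by linarith
  -- equality in the triangle inequality puts `z` on the ray from `p` through `x`
  have hray : ‖x - p‖ • (z - p) = t • (x - p) := by
    have := (sameRay_iff_norm_add.2 (by rw [← hsplit]; linarith)).norm_smul_eq
    rw [hzxT] at this
    rw [hsplit, smul_add, ← this, ← add_smul, add_comm]
  have hball : 2 * ⟪z - p, c - p⟫ ≤ ‖c - p‖ ^ 2 := by
    have hzc : t ≤ ‖(z - p) - (c - p)‖ := by
      rw [sub_sub_sub_cancel_right, ← dist_eq_norm]
      exact hz.trans (infDist_le_dist_of_mem hc)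
    have := pow_le_pow_left₀ ht hzc 2
    rw [norm_sub_sq_real, hzpt] at this
    linarith
  have hinner : t * ⟪x - p, c - p⟫ = ‖x - p‖ * ⟪z - p, c - p⟫ := by
    rw [← real_inner_smul_left, ← hray, real_inner_smul_left]
  nlinarith [norm_nonneg (x - p)]

namespace IsMetricProjOnTube

variable [ProperSpace E] {C : Set E} {δ : ℝ} {proj : E → E}

lemma two_mul_inner_le (h : IsMetricProjOnTube C δ proj) (hC : IsClosed C) {x : E}
    (hx : infDist x C < δ) {c : E} (hc : c ∈ C) :
    2 * δ * ⟪x - proj x, c - proj x⟫ ≤ infDist x C * ‖c - proj x‖ ^ 2 := by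
  rcases (infDist_nonneg (x := x) (s := C)).eq_or_lt with hx0 | hx0
  · have : x - proj x = 0 := norm_eq_zero.1 (by rw [h.norm_sub x hx, ← hx0])
    simp [this, ← hx0]
  have hlt : ∀ t ∈ Ioo (infDist x C) δ,
      2 * t * ⟪x - proj x, c - proj x⟫ ≤ infDist x C * ‖c - proj x‖ ^ 2 := by
    rintro t ⟨hxt, htδ⟩
    obtain ⟨z, hzx, hz⟩ :=
      h.exists_dist_le_add_le_infDist hC hx0 (sub_nonneg.2 hxt.le) (by linarith)
    rw [← h.norm_sub x hx] at hz hzx ⊢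
    simpa only [add_sub_cancel] using two_mul_inner_le_of_le_infDist (h.mem x hx) hc hzx hz
  have hclosed : IsClosed {t : ℝ |
      2 * t * ⟪x - proj x, c - proj x⟫ ≤ infDist x C * ‖c - proj x‖ ^ 2} :=
    isClosed_le (by fun_prop) continuous_const
  exact hclosed.closure_subset_iff.2 hlt ((closure_Ioo hx.ne).symm ▸ right_mem_Icc.2 hx.le)

lemma norm_sub_le (h : IsMetricProjOnTube C δ proj) (hC : IsClosed C) {γ : ℝ} (hγδ : γ < δ)
    {x y : E} (hx : infDist x C < γ) (hy : infDist y C < γ) :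
    ‖proj x - proj y‖ ≤ δ / (δ - γ) * ‖x - y‖ := by
  set P := proj x
  set Q := proj y
  have hnx := h.two_mul_inner_le hC (hx.trans hγδ) (h.mem y (hy.trans hγδ))
  have hny := h.two_mul_inner_le hC (hy.trans hγδ) (h.mem x (hx.trans hγδ))
  rw [norm_sub_rev] at hnx
  have hsum : ⟪x - P, Q - P⟫ + ⟪y - Q, P - Q⟫ = ‖P - Q‖ ^ 2 - ⟪x - y, P - Q⟫ := by
    rw [← real_inner_self_eq_norm_sq]
    simp only [inner_sub_left, inner_sub_right, real_inner_comm]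
    ring
  have hδ : 0 ≤ δ := infDist_nonneg.trans (hx.trans hγδ).le
  have hcs := mul_le_mul_of_nonneg_left (real_inner_le_norm (x - y) (P - Q)) hδ
  have hdist := mul_le_mul_of_nonneg_right (add_le_add hx.le hy.le) (sq_nonneg ‖P - Q‖)
  have hkey : (δ - γ) * ‖P - Q‖ * ‖P - Q‖ ≤ δ * ‖x - y‖ * ‖P - Q‖ := by nlinarith
  rcases (norm_nonneg (P - Q)).eq_or_lt with hS | hS
  · rw [← hS]
    exact mul_nonneg (div_nonneg hδ (sub_pos.2 hγδ).le) (norm_nonneg _)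
  rw [div_mul_eq_mul_div, le_div_iff₀ (sub_pos.2 hγδ), mul_comm]
  exact le_of_mul_le_mul_right hkey hS

end IsMetricProjOnTube

theorem stmt_10_general (n p : ℕ) (C : Set (EuclideanSpace ℝ (Fin n × Fin p)))
    (hC : IsClosed C) (δ : ℝ)
    (proj : EuclideanSpace ℝ (Fin n × Fin p) → EuclideanSpace ℝ (Fin n × Fin p))
    (hproj : ∀ X, Metric.infDist X C < δ →
      proj X ∈ C ∧ ‖X - proj X‖ = Metric.infDist X C)
    (huniq : ∀ X, Metric.infDist X C < δ →
      ∀ Y ∈ C, ‖X - Y‖ = Metric.infDist X C → Y = proj X)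
    (γ : ℝ) (hγ : γ ∈ Set.Ioo 0 δ) :
    ∀ X Y, Metric.infDist X C < γ → Metric.infDist Y C < γ →
      ‖proj X - proj Y‖ ≤ (δ / (δ - γ)) * ‖X - Y‖ := by
  intro X Y hX hY
  have h : IsMetricProjOnTube C δ proj :=
    ⟨fun X hX => (hproj X hX).1, fun X hX => (hproj X hX).2, huniq⟩
  exact h.norm_sub_le hC hγ.2 hX hY

/-- Lipschitz continuity of the metric projection onto a `δ`-proximally smooth closed set:
if the projection is single-valued within distance `δ` of `C`, then for `γ ∈ (0, δ)` and
points within distance `γ` of `C`, `‖Proj_C(X) - Proj_C(Y)‖ ≤ (δ/(δ-γ))‖X - Y‖`. -/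
theorem stmt_10 (n p : ℕ) (C : Set (EuclideanSpace ℝ (Fin n × Fin p)))
    (hC : IsClosed C) (hCne : C.Nonempty) (δ : ℝ) (hδ : 0 < δ)
    (proj : EuclideanSpace ℝ (Fin n × Fin p) → EuclideanSpace ℝ (Fin n × Fin p))
    (hproj : ∀ X, Metric.infDist X C < δ →
      proj X ∈ C ∧ ‖X - proj X‖ = Metric.infDist X C)
    (huniq : ∀ X, Metric.infDist X C < δ →
      ∀ Y ∈ C, ‖X - Y‖ = Metric.infDist X C → Y = proj X)
    (γ : ℝ) (hγ : γ ∈ Set.Ioo 0 δ) :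
    ∀ X Y, Metric.infDist X C < γ → Metric.infDist Y C < γ →
      ‖proj X - proj Y‖ ≤ (δ / (δ - γ)) * ‖X - Y‖ :=
  stmt_10_general n p C hC δ proj hproj huniq γ hγ
end

section
/- The Stiefel manifold St(n, p) = {X ∈ ℝ^{n×p} : XᵀX = I_p} is 1-proximally smooth: for any X ∈ ℝ^{n×p} with dist(X, St(n,p)) < 1, the nearest point in St(n, p) to X is unique. -/
open Matrix

/-- Equip matrix spaces with the Frobenius norm. -/
noncomputable local instance frobInst (n p : ℕ) :
    NormedAddCommGroup (Matrix (Fin n) (Fin p) ℝ) :=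
  Matrix.frobeniusNormedAddCommGroup

/-!
Being within distance `1` of some `Z ∈ St(n, p)` forces `X` to have full column rank, since
`‖Z v‖ = ‖v‖` while `‖(Z - X) v‖ < ‖v‖`. Hence `X = P S` is a polar decomposition with
`P ∈ St(n, p)` and `S = (XᵀX)^{1/2}` positive definite, and for every `Y ∈ St(n, p)`
`‖X - Y‖² = ‖X - P‖² + tr((Y - P) S (Y - P)ᵀ)`, whose last term is positive unless `Y = P`.
-/

theorem Matrix.exists_transpose_mul_self_eq_one {m n R : Type*} [Fintype m] [DecidableEq m]
    [DecidableEq n] [CommSemiring R] (f : n ↪ m) : ∃ Y : Matrix m n R, Yᵀ * Y = 1 :=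
  ⟨(1 : Matrix m m R).submatrix id f, by
    rw [transpose_submatrix, transpose_one, ← submatrix_mul _ _ _ _ _ Function.bijective_id,
      one_mul, submatrix_one _ f.injective]⟩

theorem Metric.existsUnique_dist_eq_infDist_of_forall_dist_lt {α : Type*} [PseudoMetricSpace α]
    {s : Set α} {x y : α} (hy : y ∈ s) (h : ∀ z ∈ s, z ≠ y → dist x y < dist x z) :
    ∃! z, z ∈ s ∧ dist x z = infDist x s := by
  have hle : ∀ z ∈ s, dist x y ≤ dist x z := fun z hz => by
    rcases eq_or_ne z y with rfl | hzy
    · exact le_rfl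
    · exact (h z hz hzy).le
  have hinf : dist x y = infDist x s :=
    le_antisymm ((le_infDist ⟨y, hy⟩).2 hle) (infDist_le_dist_of_mem hy)
  refine ⟨y, ⟨hy, hinf⟩, fun z ⟨hz, hzd⟩ => by_contra fun hzy => ?_⟩
  exact (h z hz hzy).ne (hinf.trans hzd.symm)

section Frobenius

open scoped Matrix.Norms.Frobenius

variable {m n ι : Type*} [Fintype m] [Fintype n] [Fintype ι]

namespace Matrix

theorem frobenius_norm_sq_eq_trace (A : Matrix m n ℝ) : ‖A‖ ^ 2 = (Aᵀ * A).trace := by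
  have hs : (0 : ℝ) ≤ ∑ i, ∑ j, ‖A i j‖ ^ (2 : ℝ) := by positivity
  rw [frobenius_norm_def, ← Real.rpow_natCast, ← Real.rpow_mul hs, Finset.sum_comm]
  simp [trace, mul_apply, sq]

theorem frobenius_norm_mul_of_transpose_mul_self_eq_one [DecidableEq n] {Z : Matrix m n ℝ}
    (hZ : Zᵀ * Z = 1) (C : Matrix n ι ℝ) : ‖Z * C‖ = ‖C‖ := by
  refine (sq_eq_sq₀ (norm_nonneg _) (norm_nonneg _)).1 ?_
  rw [frobenius_norm_sq_eq_trace, frobenius_norm_sq_eq_trace, transpose_mul, Matrix.mul_assoc,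
    ← Matrix.mul_assoc Zᵀ, hZ, Matrix.one_mul]

theorem posDef_transpose_mul_self_of_norm_sub_lt_one [DecidableEq n] {X Z : Matrix m n ℝ}
    (hZ : Zᵀ * Z = 1) (hXZ : ‖X - Z‖ < 1) : (Xᵀ * X).PosDef := by
  rw [← conjTranspose_eq_transpose_of_trivial]
  refine PosDef.conjTranspose_mul_self X fun v w hvw => ?_
  -- injectivity is tested on column matrices, where the Frobenius norm is available
  suffices ∀ C : Matrix n Unit ℝ, X * C = 0 → C = 0 by
    simpa [hvw, sub_eq_zero, mulVec_sub, ← replicateCol_mulVec, replicateCol_eq_zero] using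
      this (replicateCol Unit (v - w))
  intro C hC
  have hle : ‖C‖ ≤ ‖Z - X‖ * ‖C‖ := calc
    ‖C‖ = ‖Z * C‖ := (frobenius_norm_mul_of_transpose_mul_self_eq_one hZ C).symm
    _ = ‖(Z - X) * C‖ := by rw [Matrix.sub_mul, hC, sub_zero]
    _ ≤ ‖Z - X‖ * ‖C‖ := frobenius_norm_mul _ _
  rw [norm_sub_rev] at hle
  exact norm_eq_zero.1 (by nlinarith [norm_nonneg C])

theorem trace_mul_mul_transpose_pos {S : Matrix n n ℝ} (hS : S.PosDef) {M : Matrix m n ℝ}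
    (hM : M ≠ 0) : 0 < (M * S * Mᵀ).trace := by
  have hdiag : ∀ i, (M * S * Mᵀ).diag i = star (M i) ⬝ᵥ (S *ᵥ M i) := fun i => by
    simp only [diag_apply, mul_apply, transpose_apply, dotProduct, mulVec, star_trivial,
      Finset.mul_sum, Finset.sum_mul]
    rw [Finset.sum_comm]
    exact Finset.sum_congr rfl fun _ _ => Finset.sum_congr rfl fun _ _ => by ring
  obtain ⟨i, hi⟩ := Function.ne_iff.1 hM
  refine Finset.sum_pos' (fun j _ => ?_) ⟨i, Finset.mem_univ _, ?_⟩
  · exact (hdiag j).symm ▸ hS.posSemidef.dotProduct_mulVec_nonneg _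
  · exact (hdiag i).symm ▸ hS.dotProduct_mulVec_pos hi

open scoped MatrixOrder in
theorem exists_eq_mul_posDef_of_posDef_transpose_mul_self [DecidableEq n] {X : Matrix m n ℝ}
    (hX : (Xᵀ * X).PosDef) :
    ∃ (P : Matrix m n ℝ) (S : Matrix n n ℝ), Pᵀ * P = 1 ∧ S.PosDef ∧ X = P * S := by
  set S := CFC.sqrt (Xᵀ * X)
  have hS : S.PosDef := (IsStrictlyPositive.sqrt _ hX.isStrictlyPositive).posDef
  have hSS : S * S = Xᵀ * X := CFC.sqrt_mul_sqrt_self _ hX.posSemidef.nonneg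
  have hdet : IsUnit S.det := (isUnit_iff_isUnit_det S).1 hS.isUnit
  refine ⟨X * S⁻¹, S, ?_, hS, ?_⟩
  · rw [transpose_mul, transpose_nonsing_inv, (isHermitian_iff_isSymm.1 hS.isHermitian).eq,
      Matrix.mul_assoc, ← Matrix.mul_assoc Xᵀ, ← hSS, Matrix.mul_assoc, mul_nonsing_inv _ hdet,
      Matrix.mul_one, nonsing_inv_mul _ hdet]
  · rw [Matrix.mul_assoc, nonsing_inv_mul _ hdet, Matrix.mul_one]

theorem frobenius_norm_mul_sub_sq [DecidableEq n] {P Y : Matrix m n ℝ} {S : Matrix n n ℝ}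
    (hP : Pᵀ * P = 1) (hY : Yᵀ * Y = 1) (hS : S.IsSymm) :
    ‖P * S - Y‖ ^ 2 = ‖P * S - P‖ ^ 2 + ((Y - P) * S * (Y - P)ᵀ).trace := by
  simp only [frobenius_norm_sq_eq_trace, transpose_sub, transpose_mul, hS.eq, Matrix.sub_mul,
    Matrix.mul_sub, trace_sub]
  have hPS : (Pᵀ * (P * S)).trace = S.trace := by rw [← Matrix.mul_assoc, hP, Matrix.one_mul]
  have hSP : (S * Pᵀ * P).trace = S.trace := by rw [Matrix.mul_assoc, hP, Matrix.mul_one]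
  have hYSY : (Y * S * Yᵀ).trace = S.trace := by
    rw [trace_mul_comm, ← Matrix.mul_assoc, hY, Matrix.one_mul]
  have hPSP : (P * S * Pᵀ).trace = S.trace := by
    rw [trace_mul_comm, ← Matrix.mul_assoc, hP, Matrix.one_mul]
  have hPSY : (P * S * Yᵀ).trace = (Yᵀ * (P * S)).trace := trace_mul_comm _ _
  have hYSP : (Y * S * Pᵀ).trace = (S * Pᵀ * Y).trace := by
    rw [Matrix.mul_assoc, trace_mul_comm]
  rw [hPS, hSP, hYSY, hPSP, hPSY, hYSP, hP, hY]
  ring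

theorem norm_mul_sub_self_lt_norm_mul_sub [DecidableEq n] {P Y : Matrix m n ℝ}
    {S : Matrix n n ℝ} (hP : Pᵀ * P = 1) (hS : S.PosDef) (hY : Yᵀ * Y = 1) (hYP : Y ≠ P) :
    ‖P * S - P‖ < ‖P * S - Y‖ := by
  have hsq := frobenius_norm_mul_sub_sq hP hY (isHermitian_iff_isSymm.1 hS.isHermitian)
  have hpos := trace_mul_mul_transpose_pos hS (sub_ne_zero.2 hYP)
  exact (pow_lt_pow_iff_left₀ (norm_nonneg _) (norm_nonneg _) two_ne_zero).1 (by linarith)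

end Matrix

end Frobenius

/-- The Stiefel manifold `St(n,p) = {X : XᵀX = I}` is `1`-proximally smooth with respect to
the Frobenius norm: any `X` with `dist(X, St(n,p)) < 1` has a unique nearest point in
`St(n,p)`. -/
theorem stmt_11 (n p : ℕ) (hpn : p ≤ n)
    (X : Matrix (Fin n) (Fin p) ℝ)
    (hX : Metric.infDist X {Y : Matrix (Fin n) (Fin p) ℝ | Yᵀ * Y = 1} < 1) :
    ∃! Y : Matrix (Fin n) (Fin p) ℝ,
      Y ∈ {Y : Matrix (Fin n) (Fin p) ℝ | Yᵀ * Y = 1} ∧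
      dist X Y = Metric.infDist X {Y : Matrix (Fin n) (Fin p) ℝ | Yᵀ * Y = 1} := by
  obtain ⟨Y₀, hY₀⟩ := exists_transpose_mul_self_eq_one (R := ℝ) (Fin.castLEEmb hpn)
  obtain ⟨Z, hZ, hXZ⟩ := (Metric.infDist_lt_iff ⟨Y₀, hY₀⟩).1 hX
  rw [dist_eq_norm] at hXZ
  obtain ⟨P, S, hP, hS, rfl⟩ := exists_eq_mul_posDef_of_posDef_transpose_mul_self
    (posDef_transpose_mul_self_of_norm_sub_lt_one hZ hXZ)
  refine Metric.existsUnique_dist_eq_infDist_of_forall_dist_lt hP fun Y hY hYP => ?_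
  simpa only [dist_eq_norm] using norm_mul_sub_self_lt_norm_mul_sub hP hS hY hYP
end
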